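/- For every positive integer n and real x ≥ 0, G_n(x) = ∑_{j=0}^{n−1} (1+2x)^{2j−2n+1} · 4^{1−n} · C(2n−2j−2, n−j−1) · C(2j,j). -/

import Mathlib

set_option maxHeartbeats 1000000

open Finset Filter

namespace Stmt7

def sh (f : ℕ → ℝ) : ℕ → ℝ
  | 0 => 0
  | j+1 => f j

@[simp] lemma sh_zero (f : ℕ → ℝ) : sh f 0 = 0 := rfl
@[simp] lemma sh_succ (f : ℕ → ℝ) (j : ℕ) : sh f (j+1) = f j := rfl

/-- real-subtraction version of `Nat.choose_succ_right_eq` -/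
lemma choose_succ_right_real (m j : ℕ) :
    (m.choose (j+1) : ℝ) * ((j:ℝ)+1) = (m.choose j : ℝ) * ((m : ℝ) - (j:ℝ)) := by
  rcases lt_trichotomy j m with h | h | h
  · have h' := Nat.choose_succ_right_eq m j
    have h'' := congrArg (fun t : ℕ => (t : ℝ)) h'
    push_cast [Nat.cast_sub h.le] at h''
    linarith
  · subst h
    simp [Nat.choose_succ_self]
  · rw [Nat.choose_eq_zero_of_lt h, Nat.choose_eq_zero_of_lt (by omega)]
    simp

private lemma key1 (M I a b c : ℝ) (hI : 0 ≤ I)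
    (h1 : b * (I+1) = a * (M - I)) (h2 : c * (I+2) = b * (M - (I+1))) :
    (M+2) * (a+2*b+c)^2
      = (2*M+3) * ((b+c)^2 + (a+b)^2) - (M+1) * (c^2 - 2*b^2 + a^2) := by
  have hI1 : I + 1 ≠ 0 := by positivity
  have hI2 : I + 2 ≠ 0 := by positivity
  have hb : b = a * (M - I) / (I+1) := by rw [eq_div_iff hI1]; linarith
  have hc : c = b * (M - (I+1)) / (I+2) := by rw [eq_div_iff hI2]; linarith
  rw [hc, hb]
  field_simp
  ring

def Fq (m : ℕ) : ℕ → ℝ := fun j => ((m.choose j : ℕ) : ℝ)^2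

lemma L1 (m j : ℕ) :
    (m+2 : ℝ) * Fq (m+2) j
      = (2*m+3) * (Fq (m+1) j + sh (Fq (m+1)) j)
        - (m+1) * (Fq m j - 2 * sh (Fq m) j + sh (sh (Fq m)) j) := by
  match j with
  | 0 =>
    simp [Fq, sh]
    ring
  | 1 =>
    simp only [Fq, sh_succ, sh_zero, Nat.choose_one_right, Nat.choose_zero_right]
    push_cast
    ring
  | (i+2) =>
    have pas : ∀ M k : ℕ, ((M+1).choose (k+1) : ℝ) = (M.choose k : ℝ) + (M.choose (k+1) : ℝ) := by
      intro M k
      rw [Nat.choose_succ_succ]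
      push_cast
      ring
    have h1 := choose_succ_right_real m i
    have h2 := choose_succ_right_real m (i+1)
    rw [show i+1+1 = i+2 from rfl] at h2
    push_cast at h2
    have e1 : ((m+1).choose (i+1) : ℝ) = (m.choose i : ℝ) + (m.choose (i+1) : ℝ) := pas m i
    have e2 : ((m+1).choose (i+2) : ℝ) = (m.choose (i+1) : ℝ) + (m.choose (i+2) : ℝ) := pas m (i+1)
    have e3 : ((m+2).choose (i+2) : ℝ)
        = (m.choose i : ℝ) + 2*(m.choose (i+1) : ℝ) + (m.choose (i+2) : ℝ) := by
      rw [pas (m+1) (i+1), e1, e2]; ring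
    have hk := key1 (m:ℝ) (i:ℝ) (m.choose i : ℝ) (m.choose (i+1) : ℝ) (m.choose (i+2) : ℝ)
      (by positivity) h1 (by linarith)
    simp only [Fq, sh_succ, sh_zero]
    rw [e3, e2, e1]
    linarith [hk]


lemma sum_sh (f : ℕ → ℝ) (z : ℝ) (N : ℕ) :
    ∑ j ∈ range (N+1), sh f j * z^j = z * ∑ j ∈ range N, f j * z^j := by
  rw [Finset.sum_range_succ']
  simp only [sh_succ, sh_zero, zero_mul, add_zero]
  rw [Finset.mul_sum]
  exact Finset.sum_congr rfl fun i _ => by ring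

def Q (m : ℕ) (z : ℝ) : ℝ := ∑ j ∈ range (m+1), Fq m j * z^j

lemma Q_ext (m N : ℕ) (h : m < N) (z : ℝ) : Q m z = ∑ j ∈ range N, Fq m j * z^j := by
  rw [Q]
  refine Finset.sum_subset (Finset.range_subset_range.mpr (by omega : m+1 ≤ N)) ?_
  intro j _ hj
  simp only [Finset.mem_range, not_lt] at hj
  have : m.choose j = 0 := Nat.choose_eq_zero_of_lt (by omega)
  simp [Fq, this]

lemma Q_rec (m : ℕ) (z : ℝ) :
    (m+2 : ℝ) * Q (m+2) z = (2*m+3) * (1+z) * Q (m+1) z - (m+1) * (1-z)^2 * Q m z := by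
  have hQ2 : Q (m+2) z = ∑ j ∈ range (m+3), Fq (m+2) j * z^j := rfl
  have hQ1 : Q (m+1) z = ∑ j ∈ range (m+3), Fq (m+1) j * z^j := Q_ext _ _ (by omega) z
  have hQ0 : Q m z = ∑ j ∈ range (m+3), Fq m j * z^j := Q_ext _ _ (by omega) z
  have hQ1z : z * Q (m+1) z = ∑ j ∈ range (m+3), sh (Fq (m+1)) j * z^j := by
    rw [Q_ext m.succ (m+2) (by omega) z, ← sum_sh]
  have hQ0z : z * Q m z = ∑ j ∈ range (m+3), sh (Fq m) j * z^j := by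
    rw [Q_ext m (m+2) (by omega) z, ← sum_sh]
  have hQ0zz : z^2 * Q m z = ∑ j ∈ range (m+3), sh (sh (Fq m)) j * z^j := by
    have s1 : z * Q m z = ∑ j ∈ range (m+2), sh (Fq m) j * z^j := by
      rw [Q_ext m (m+1) (by omega) z, ← sum_sh]
    have h2 : z^2 * Q m z = z * (z * Q m z) := by ring
    rw [h2, s1, ← sum_sh]
  calc (m+2 : ℝ) * Q (m+2) z
      = ∑ j ∈ range (m+3), ((m:ℝ)+2) * Fq (m+2) j * z^j := by
        rw [hQ2, Finset.mul_sum]; exact Finset.sum_congr rfl fun j _ => by ring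
    _ = ∑ j ∈ range (m+3),
          (((2*m+3) * (Fq (m+1) j * z^j + sh (Fq (m+1)) j * z^j))
            - ((m+1) * (Fq m j * z^j - 2 * (sh (Fq m) j * z^j) + sh (sh (Fq m)) j * z^j))) := by
        refine Finset.sum_congr rfl fun j _ => ?_
        have := L1 m j
        linear_combination (z^j) * this
    _ = (2*m+3) * ((∑ j ∈ range (m+3), Fq (m+1) j * z^j) + ∑ j ∈ range (m+3), sh (Fq (m+1)) j * z^j)
          - (m+1) * ((∑ j ∈ range (m+3), Fq m j * z^j) - 2 * (∑ j ∈ range (m+3), sh (Fq m) j * z^j)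
              + ∑ j ∈ range (m+3), sh (sh (Fq m)) j * z^j) := by
        simp only [Finset.sum_sub_distrib, Finset.sum_add_distrib, ← Finset.mul_sum]
    _ = (2*m+3) * (1+z) * Q (m+1) z - (m+1) * (1-z)^2 * Q m z := by
        rw [← hQ1, ← hQ1z, ← hQ0, ← hQ0z, ← hQ0zz]
        ring


/-- central binomial coefficient as a real number -/
def cb (j : ℕ) : ℝ := ((2*j).choose j : ℝ)

lemma cb_succ (j : ℕ) : ((j:ℝ)+1) * cb (j+1) = (4*(j:ℝ)+2) * cb j := by
  have h := Nat.succ_mul_centralBinom_succ j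
  have h' := congrArg (fun t : ℕ => (t : ℝ)) h
  push_cast at h'
  simp only [cb, Nat.centralBinom] at *
  linarith

lemma cb_zero : cb 0 = 1 := by simp [cb]
lemma cb_one : cb 1 = 2 := by norm_num [cb]

lemma cb_pos (j : ℕ) : 0 < cb j := by
  have := Nat.centralBinom_pos j
  simp only [cb, Nat.centralBinom] at *
  exact_mod_cast this

def gD (m : ℕ) : ℕ → ℝ := fun j => if j ≤ m then cb (m - j) * cb j else 0

def Db (m : ℕ) (y : ℝ) : ℝ := ∑ j ∈ range (m+1), gD m j * y^j

private lemma key5 (M I L u v b1 b2 : ℝ) (hI : 0 ≤ I) (hL : 0 ≤ L) (hM : M = I + L + 1)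
    (h1 : (I+1) * b1 = (4*I+2) * u) (h2 : (L+2) * b2 = (4*L+6) * v) :
    (M+2) * (b2 * b1) = (4*M+6) * (v * b1 + b2 * u) - (16*M+16) * (v * u) := by
  have hI1 : I + 1 ≠ 0 := by positivity
  have hL2 : L + 2 ≠ 0 := by positivity
  have hb1 : b1 = (4*I+2) * u / (I+1) := by rw [eq_div_iff hI1]; linarith
  have hb2 : b2 = (4*L+6) * v / (L+2) := by rw [eq_div_iff hL2]; linarith
  subst hM
  rw [hb1, hb2]
  field_simp
  ring

lemma L5 (m j : ℕ) :
    (m+2 : ℝ) * gD (m+2) j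
      = (4*m+6) * (gD (m+1) j + sh (gD (m+1)) j) - (16*m+16) * sh (gD m) j := by
  match j with
  | 0 =>
    simp only [gD, sh_zero, Nat.zero_le, if_true, Nat.sub_zero, cb_zero, mul_one, mul_zero, sub_zero]
    have := cb_succ (m+1)
    push_cast at this
    linarith
  | (i+1) =>
    rcases lt_trichotomy (i+1) (m+1) with hc | hc | hc
    · -- i+1 ≤ m : generic
      have hi : i + 1 ≤ m := by omega
      obtain ⟨l, hl⟩ : ∃ l, m = i + 1 + l := ⟨m - (i+1), by omega⟩
      subst hl
      have easub : i + 1 + l + 2 - (i+1) = l + 2 := by omega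
      have easub1 : i + 1 + l + 1 - (i+1) = l + 1 := by omega
      have easub2 : i + 1 + l + 1 - i = l + 2 := by omega
      have easub3 : i + 1 + l - i = l + 1 := by omega
      simp only [gD, sh_succ, if_pos (by omega : i+1 ≤ i+1+l+2), if_pos (by omega : i+1 ≤ i+1+l+1),
        if_pos (by omega : i ≤ i+1+l+1), if_pos (by omega : i ≤ i+1+l),
        easub, easub1, easub2, easub3]
      have h1 := cb_succ i
      have h2 := cb_succ (l+1)
      push_cast at h1 h2
      have hk := key5 ((i:ℝ)+1+(l:ℝ)) (i:ℝ) (l:ℝ) (cb i) (cb (l+1))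
        (b1 := cb (i+1)) (b2 := cb (l+2))
        (by positivity) (by positivity) (by ring) (by linarith) (by linarith)
      push_cast
      linarith [hk]
    · -- j = m+1
      obtain rfl : m = i := by omega
      have s1 : m+2 - (m+1) = 1 := by omega
      have s2 : m+1 - (m+1) = 0 := by omega
      have s3 : m+1 - m = 1 := by omega
      have s4 : m - m = 0 := by omega
      simp only [gD, sh_succ, if_pos (by omega : m+1 ≤ m+2), if_pos (le_refl (m+1)),
        if_pos (by omega : m ≤ m+1), if_pos (le_refl m), s1, s2, s3, s4, cb_zero, cb_one, one_mul]
      have h := cb_succ m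
      have hm1 : ((m):ℝ)+1 ≠ 0 := by positivity
      have hcb : cb (m+1) = (4*((m):ℝ)+2) * cb m / (((m):ℝ)+1) := by rw [eq_div_iff hm1]; linarith
      rw [hcb]
      field_simp
      ring
    · -- j ≥ m+2
      rcases eq_or_lt_of_le (by omega : m + 2 ≤ i + 1) with hc2 | hc2
      · -- j = m+2
        have hi : i = m + 1 := by omega
        subst hi
        simp only [gD, sh_succ, if_pos (le_refl (m+2)), if_neg (by omega : ¬ (m+2 ≤ m+1)),
          if_pos (by omega : m+1 ≤ m+1), if_neg (by omega : ¬ (m+1 ≤ m)),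
          Nat.sub_self, cb_zero, one_mul]
        have := cb_succ (m+1)
        push_cast at this
        linarith
      · -- j ≥ m+3
        simp only [gD, sh_succ, if_neg (by omega : ¬ (i+1 ≤ m+2)), if_neg (by omega : ¬ (i+1 ≤ m+1)),
          if_neg (by omega : ¬ (i ≤ m+1)), if_neg (by omega : ¬ (i ≤ m))]
        ring

lemma gD_zero (m j : ℕ) (h : m < j) : gD m j = 0 := by
  simp [gD, if_neg (by omega : ¬ (j ≤ m))]

lemma Db_ext (m N : ℕ) (h : m < N) (y : ℝ) : Db m y = ∑ j ∈ range N, gD m j * y^j := by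
  rw [Db]
  refine Finset.sum_subset (Finset.range_subset_range.mpr (by omega : m+1 ≤ N)) ?_
  intro j _ hj
  simp only [Finset.mem_range, not_lt] at hj
  rw [gD_zero m j (by omega)]
  ring

lemma Db_rec (m : ℕ) (y : ℝ) :
    (m+2 : ℝ) * Db (m+2) y = (4*m+6) * (1+y) * Db (m+1) y - (16*m+16) * y * Db m y := by
  have hD2 : Db (m+2) y = ∑ j ∈ range (m+3), gD (m+2) j * y^j := rfl
  have hD1 : Db (m+1) y = ∑ j ∈ range (m+3), gD (m+1) j * y^j := Db_ext _ _ (by omega) y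
  have hD1y : y * Db (m+1) y = ∑ j ∈ range (m+3), sh (gD (m+1)) j * y^j := by
    rw [Db_ext (m+1) (m+2) (by omega) y, ← sum_sh]
  have hD0y : y * Db m y = ∑ j ∈ range (m+3), sh (gD m) j * y^j := by
    rw [Db_ext m (m+2) (by omega) y, ← sum_sh]
  calc (m+2 : ℝ) * Db (m+2) y
      = ∑ j ∈ range (m+3), ((m:ℝ)+2) * gD (m+2) j * y^j := by
        rw [hD2, Finset.mul_sum]; exact Finset.sum_congr rfl fun j _ => by ring
    _ = ∑ j ∈ range (m+3),
          (((4*m+6) * (gD (m+1) j * y^j + sh (gD (m+1)) j * y^j))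
            - ((16*m+16) * (sh (gD m) j * y^j))) := by
        refine Finset.sum_congr rfl fun j _ => ?_
        have := L5 m j
        linear_combination (y^j) * this
    _ = (4*m+6) * ((∑ j ∈ range (m+3), gD (m+1) j * y^j) + ∑ j ∈ range (m+3), sh (gD (m+1)) j * y^j)
          - (16*m+16) * (∑ j ∈ range (m+3), sh (gD m) j * y^j) := by
        simp only [Finset.sum_sub_distrib, Finset.sum_add_distrib, ← Finset.mul_sum]
    _ = (4*m+6) * (1+y) * Db (m+1) y - (16*m+16) * y * Db m y := by
        rw [← hD1, ← hD1y, ← hD0y]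
        ring


/-- the key bridge: `4^m (1+x)^{2m} Q_m(x²/(1+x)²) = Db_m((1+2x)²)` -/
lemma PD : ∀ (m : ℕ) (x : ℝ), 0 ≤ x →
    (4:ℝ)^m * (1+x)^(2*m) * Q m (x^2/(1+x)^2) = Db m ((1+2*x)^2) := by
  have main : ∀ m : ℕ, (∀ (x : ℝ), 0 ≤ x →
      (4:ℝ)^m * (1+x)^(2*m) * Q m (x^2/(1+x)^2) = Db m ((1+2*x)^2)) ∧
      (∀ (x : ℝ), 0 ≤ x →
      (4:ℝ)^(m+1) * (1+x)^(2*(m+1)) * Q (m+1) (x^2/(1+x)^2) = Db (m+1) ((1+2*x)^2)) := by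
    intro m
    induction m with
    | zero =>
      constructor
      · intro x hx
        simp [Q, Db, Fq, gD, cb_zero]
      · intro x hx
        have hx1 : (1:ℝ) + x ≠ 0 := by positivity
        have hQ : Q 1 (x^2/(1+x)^2) = 1 + x^2/(1+x)^2 := by
          simp [Q, Fq, Finset.sum_range_succ]
        have hD : Db 1 ((1+2*x)^2) = 2 + 2*(1+2*x)^2 := by
          simp [Db, gD, Finset.sum_range_succ, cb_zero, cb_one]
        rw [hQ, hD]
        field_simp
        ring
    | succ m ih =>
      obtain ⟨ih0, ih1⟩ := ih
      refine ⟨ih1, ?_⟩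
      intro x hx
      have hx1 : (1:ℝ) + x ≠ 0 := by positivity
      set z : ℝ := x^2/(1+x)^2 with hz
      have hA : (1+x)^2 * (1 + z) = (1+2*x)^2/2 + 1/2 := by
        rw [hz]; field_simp; ring
      have hB : (1+x)^2 * (1 - z) = 1 + 2*x := by
        rw [hz]; field_simp; ring
      have step1 : ((m:ℝ)+2) * ((1+x)^(2*(m+2)) * Q (m+2) z)
          = (2*m+3) * ((1+2*x)^2/2 + 1/2) * ((1+x)^(2*(m+1)) * Q (m+1) z)
            - (m+1) * ((1+2*x)^2)^1 * ((1+x)^(2*m) * Q m z) := by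
        have hq := Q_rec m z
        calc ((m:ℝ)+2) * ((1+x)^(2*(m+2)) * Q (m+2) z)
            = (1+x)^(2*(m+2)) * (((m:ℝ)+2) * Q (m+2) z) := by ring
          _ = (1+x)^(2*(m+2)) * ((2*m+3) * (1+z) * Q (m+1) z - (m+1) * (1-z)^2 * Q m z) := by
              rw [hq]
          _ = (2*m+3) * ((1+x)^2*(1+z)) * ((1+x)^(2*(m+1)) * Q (m+1) z)
              - (m+1) * ((1+x)^2*(1-z))^2 * ((1+x)^(2*m) * Q m z) := by ring
          _ = _ := by rw [hA, hB]; ring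
      have hD := Db_rec m ((1+2*x)^2)
      have e1 := ih1 x hx
      have e0 := ih0 x hx
      have hm2 : ((m:ℝ)+2) ≠ 0 := by positivity
      apply mul_left_cancel₀ hm2
      calc ((m:ℝ)+2) * ((4:ℝ)^(m+2) * (1+x)^(2*(m+2)) * Q (m+2) z)
          = (4:ℝ)^(m+2) * (((m:ℝ)+2) * ((1+x)^(2*(m+2)) * Q (m+2) z)) := by ring
        _ = (4:ℝ)^(m+2) * ((2*m+3) * ((1+2*x)^2/2 + 1/2) * ((1+x)^(2*(m+1)) * Q (m+1) z)
              - (m+1) * ((1+2*x)^2)^1 * ((1+x)^(2*m) * Q m z)) := by rw [step1]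
        _ = (2*m+3) * ((1+2*x)^2/2 + 1/2) * 4 * ((4:ℝ)^(m+1) * (1+x)^(2*(m+1)) * Q (m+1) z)
              - (m+1) * (1+2*x)^2 * 16 * ((4:ℝ)^m * (1+x)^(2*m) * Q m z) := by ring
        _ = (2*m+3) * ((1+2*x)^2/2 + 1/2) * 4 * Db (m+1) ((1+2*x)^2)
              - (m+1) * (1+2*x)^2 * 16 * Db m ((1+2*x)^2) := by rw [e1, e0]
        _ = ((m:ℝ)+2) * Db (m+2) ((1+2*x)^2) := by rw [hD]; ring
  intro m
  exact (main m).1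

/-- coefficients of the power series `Φ_M(z) = ∑ C(M+k,k)² z^k` -/
def Abk (M : ℕ) : ℕ → ℝ := fun k => (((M+k).choose k : ℕ) : ℝ)^2

private lemma key8 (M P a b c : ℝ) (hM : 0 ≤ M) (hP : 0 ≤ P)
    (h1 : b * (P+1) = a * (M+2)) (h2 : c * (P+2) = b * (M+1)) :
    (M+2) * ((a+2*b+c)^2 - 2*(a+b)^2 + a^2)
      = (2*M+3) * ((b+c)^2 + b^2) - (M+1) * c^2 := by
  have hM2 : M + 2 ≠ 0 := by positivity
  have hP2 : P + 2 ≠ 0 := by positivity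
  have ha : a = b * (P+1) / (M+2) := by rw [eq_div_iff hM2]; linarith
  have hc : c = b * (M+1) / (P+2) := by rw [eq_div_iff hP2]; linarith
  rw [ha, hc]
  field_simp
  ring

lemma L8 (m k : ℕ) :
    (m+2 : ℝ) * (Abk (m+2) k - 2 * sh (Abk (m+2)) k + sh (sh (Abk (m+2))) k)
      = (2*m+3) * (Abk (m+1) k + sh (Abk (m+1)) k) - (m+1) * Abk m k := by
  match k with
  | 0 =>
    simp only [Abk, sh_zero, Nat.add_zero, Nat.choose_zero_right]
    push_cast
    ring
  | 1 =>
    have a1 : m+2+1 = m+3 := by omega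
    have a2 : m+1+1 = m+2 := by omega
    have a3 : m+1+0 = m+1 := by omega
    have a4 : m+2+0 = m+2 := by omega
    simp only [Abk, sh_succ, sh_zero, a1, a2, a3, a4, Nat.choose_one_right, Nat.choose_zero_right]
    push_cast
    ring
  | (p+2) =>
    have pas : ∀ M k : ℕ, ((M+1).choose (k+1) : ℝ) = (M.choose k : ℝ) + (M.choose (k+1) : ℝ) := by
      intro M k
      rw [Nat.choose_succ_succ]
      push_cast
      ring
    have h1 := choose_succ_right_real (m+2+p) p
    have h2 := choose_succ_right_real (m+2+p) (p+1)
    push_cast at h1 h2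
    have h1' : ((m+2+p).choose (p+1) : ℝ) * ((p:ℝ)+1) = ((m+2+p).choose p : ℝ) * ((m:ℝ)+2) := by
      linear_combination h1
    have h2' : ((m+2+p).choose (p+2) : ℝ) * ((p:ℝ)+2)
        = ((m+2+p).choose (p+1) : ℝ) * ((m:ℝ)+1) := by
      linear_combination h2
    have e1 : ((m+3+p).choose (p+1) : ℝ)
        = ((m+2+p).choose p : ℝ) + ((m+2+p).choose (p+1) : ℝ) := by
      have : m+3+p = (m+2+p)+1 := by omega
      rw [this]; exact pas (m+2+p) p
    have e2 : ((m+3+p).choose (p+2) : ℝ)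
        = ((m+2+p).choose (p+1) : ℝ) + ((m+2+p).choose (p+2) : ℝ) := by
      have : m+3+p = (m+2+p)+1 := by omega
      rw [this]; exact pas (m+2+p) (p+1)
    have e3 : ((m+4+p).choose (p+2) : ℝ)
        = ((m+2+p).choose p : ℝ) + 2*((m+2+p).choose (p+1) : ℝ) + ((m+2+p).choose (p+2) : ℝ) := by
      have : m+4+p = (m+3+p)+1 := by omega
      rw [this, pas (m+3+p) (p+1), e1, e2]; ring
    have a1 : m+2+(p+2) = m+4+p := by omega
    have a2 : m+2+(p+1) = m+3+p := by omega
    have a3 : m+2+p = m+2+p := rfl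
    have a4 : m+1+(p+2) = m+3+p := by omega
    have a5 : m+1+(p+1) = m+2+p := by omega
    have a6 : m+(p+2) = m+2+p := by omega
    simp only [Abk, sh_succ, sh_zero, a1, a2, a4, a5, a6]
    rw [e3, e2, e1]
    have hk := key8 (m:ℝ) (p:ℝ) ((m+2+p).choose p : ℝ) ((m+2+p).choose (p+1) : ℝ)
      ((m+2+p).choose (p+2) : ℝ) (by positivity) (by positivity) h1' h2'
    linarith [hk]


lemma hasSum_sh {f : ℕ → ℝ} {S : ℝ} (h : HasSum f S) : HasSum (sh f) S := by
  have h2 : HasSum (fun n => sh f (n+1)) S := by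
    simpa using h
  have h3 := (hasSum_nat_add_iff (f := sh f) 1).mp h2
  simpa using h3

lemma summable_Abk (M : ℕ) {z : ℝ} (h0 : 0 ≤ z) (h1 : z < 1) :
    Summable (fun k => Abk M k * z^k) := by
  apply summable_of_ratio_norm_eventually_le (r := (1+z)/2) (by linarith)
  have t1 : Tendsto (fun k : ℕ => ((M:ℝ))/((k:ℝ)+1)) atTop (nhds 0) :=
    Tendsto.div_atTop tendsto_const_nhds
      (tendsto_atTop_add_const_right _ 1 tendsto_natCast_atTop_atTop)
  have hL : Tendsto (fun k : ℕ => (1 + (M:ℝ)/((k:ℝ)+1))^2 * z) atTop (nhds z) := by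
    have h' : Tendsto (fun k : ℕ => ((1:ℝ) + (M:ℝ)/((k:ℝ)+1))) atTop (nhds (1 + 0)) :=
      tendsto_const_nhds.add t1
    have h'' := (h'.pow 2).mul_const z
    norm_num at h''
    exact h''
  have hev : ∀ᶠ (k : ℕ) in atTop, (1 + (M:ℝ)/((k:ℝ)+1))^2 * z < (1+z)/2 :=
    hL.eventually_lt_const (show z < (1+z)/2 by linarith)
  filter_upwards [hev] with k hk
  have hk1 : ((k:ℝ)+1) ≠ 0 := by positivity
  have hrel : ((M+(k+1)).choose (k+1) : ℝ) * ((k:ℝ)+1) = (((M:ℝ)+k+1)) * ((M+k).choose k : ℝ) := by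
    have h := Nat.add_one_mul_choose_eq (M+k) k
    have h' := congrArg (fun t : ℕ => (t : ℝ)) h
    push_cast at h'
    rw [show M+(k+1) = (M+k)+1 from by omega]
    linarith
  have hfe : Abk M (k+1) * z^(k+1) = ((1 + (M:ℝ)/((k:ℝ)+1))^2 * z) * (Abk M k * z^k) := by
    simp only [Abk]
    have hsq : ((M+(k+1)).choose (k+1) : ℝ)^2 * ((k:ℝ)+1)^2
        = ((M:ℝ)+k+1)^2 * ((M+k).choose k : ℝ)^2 := by
      linear_combination (((M+(k+1)).choose (k+1) : ℝ) * ((k:ℝ)+1)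
        + ((M:ℝ)+k+1) * ((M+k).choose k : ℝ)) * hrel
    have hexp : (1 + (M:ℝ)/((k:ℝ)+1)) = ((M:ℝ)+k+1)/((k:ℝ)+1) := by field_simp; ring
    rw [hexp, div_pow, pow_succ]
    field_simp
    linear_combination (z^k * z) * hsq
  rw [hfe, Real.norm_eq_abs, Real.norm_eq_abs, abs_mul]
  have hρ : 0 ≤ (1 + (M:ℝ)/((k:ℝ)+1))^2 * z := by positivity
  rw [abs_of_nonneg hρ]
  exact mul_le_mul_of_nonneg_right (le_of_lt hk) (abs_nonneg _)

lemma hasSum_Phi : ∀ (m : ℕ) {z : ℝ}, 0 ≤ z → z < 1 →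
    HasSum (fun k => Abk m k * z^k) (Q m z / (1-z)^(2*m+1)) := by
  intro m
  induction m using Nat.strong_induction_on with
  | _ m ih =>
    match m with
    | 0 =>
      intro z h0 h1
      have hg : HasSum (fun k : ℕ => z^k) ((1-z)⁻¹) :=
        hasSum_geometric_of_lt_one h0 h1
      have hfun : (fun k : ℕ => Abk 0 k * z^k) = fun k : ℕ => z^k := by
        funext k
        simp [Abk, Nat.choose_self]
      rw [hfun]
      have hQ : Q 0 z = 1 := by simp [Q, Fq]
      rw [hQ]
      simpa using hg
    | 1 =>
      intro z h0 h1
      have hz : ‖z‖ < 1 := by rw [Real.norm_eq_abs, abs_of_nonneg h0]; exact h1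
      have h1s := hasSum_choose_mul_geometric_of_norm_lt_one (𝕜 := ℝ) 1 hz
      have h2s := hasSum_choose_mul_geometric_of_norm_lt_one (𝕜 := ℝ) 2 hz
      have hcomb := (h2s.mul_left 2).sub h1s
      have h1z : (1:ℝ) - z ≠ 0 := sub_ne_zero_of_ne (by linarith)
      have hfun : (fun n : ℕ => 2 * (((n+2).choose 2 : ℝ) * z^n) - ((n+1).choose 1 : ℝ) * z^n)
          = fun k : ℕ => Abk 1 k * z^k := by
        funext n
        have hc2 : ((n+2).choose 2 : ℝ) * 2 = ((n:ℝ)+2) * ((n:ℝ)+1) := by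
          have h := choose_succ_right_real (n+2) 1
          rw [Nat.choose_one_right] at h
          push_cast at h
          linear_combination h
        simp only [Abk, Nat.choose_one_right]
        rw [show (1:ℕ)+n = n+1 from by omega, Nat.choose_succ_self_right]
        push_cast
        linear_combination (z^n) * hc2
      rw [hfun] at hcomb
      have hval : 2 * (1 / (1 - z)^(2+1)) - 1 / (1 - z)^(1+1) = Q 1 z / (1-z)^(2*1+1) := by
        have hQ : Q 1 z = 1 + z := by
          simp [Q, Fq, Finset.sum_range_succ]
        rw [hQ]
        field_simp
        ring
      rw [hval] at hcomb
      exact hcomb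
    | (m+2) =>
      intro z h0 h1
      have hsum := summable_Abk (m+2) h0 h1
      have hT : HasSum (fun k => Abk (m+2) k * z^k) (∑' k, Abk (m+2) k * z^k) := hsum.hasSum
      set T := ∑' k, Abk (m+2) k * z^k with hTdef
      have hTsh := hasSum_sh hT
      have hTsh2 := hasSum_sh hTsh
      have hv := ih (m+1) (by omega) h0 h1
      have hw := ih m (by omega) h0 h1
      have hvsh := hasSum_sh hv
      have hc1 := ((hT.sub (hTsh.mul_left (2*z))).add (hTsh2.mul_left (z^2))).mul_left ((m:ℝ)+2)
      have hc2 := ((hv.add (hvsh.mul_left z)).mul_left (2*(m:ℝ)+3)).sub (hw.mul_left ((m:ℝ)+1))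
      have hpt : ∀ i, ((m:ℝ)+2) * ((Abk (m+2) i * z^i - 2*z * sh (fun k => Abk (m+2) k * z^k) i)
            + z^2 * sh (sh (fun k => Abk (m+2) k * z^k)) i)
          = (2*(m:ℝ)+3) * (Abk (m+1) i * z^i + z * sh (fun k => Abk (m+1) k * z^k) i)
            - ((m:ℝ)+1) * (Abk m i * z^i) := by
        intro i
        have h8 := L8 m i
        match i with
        | 0 =>
          simp only [sh_zero] at h8 ⊢
          linear_combination ((z:ℝ)^(0:ℕ)) * h8
        | 1 =>
          simp only [sh_zero, sh_succ] at h8 ⊢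
          linear_combination ((z:ℝ)^(1:ℕ)) * h8
        | (p+2) =>
          simp only [sh_succ] at h8 ⊢
          linear_combination ((z:ℝ)^(p+2)) * h8
      have hfe : (fun i => ((m:ℝ)+2) * ((Abk (m+2) i * z^i - 2*z * sh (fun k => Abk (m+2) k * z^k) i)
            + z^2 * sh (sh (fun k => Abk (m+2) k * z^k)) i))
          = (fun i => (2*(m:ℝ)+3) * (Abk (m+1) i * z^i + z * sh (fun k => Abk (m+1) k * z^k) i)
            - ((m:ℝ)+1) * (Abk m i * z^i)) := funext hpt
      rw [hfe] at hc1
      have huniq := hc1.unique hc2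
      have h1z : (0:ℝ) < 1 - z := by linarith
      have h1z' : (1:ℝ) - z ≠ 0 := ne_of_gt h1z
      have hq := Q_rec m z
      have key : ((m:ℝ)+2) * (1-z)^2 * T * (1-z)^(2*m+3)
          = (2*(m:ℝ)+3)*(1+z)*Q (m+1) z - ((m:ℝ)+1)*(1-z)^2*Q m z := by
        have expand : ((m:ℝ)+2) * (1-z)^2 * T * (1-z)^(2*m+3)
            = (((m:ℝ)+2) * ((T - 2*z*T) + z^2*T)) * (1-z)^(2*m+3) := by ring
        rw [expand, huniq]
        rw [show 2*(m+1)+1 = 2*m+3 from by omega]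
        field_simp
        ring
      have key2 : ((m:ℝ)+2) * ((1-z)^(2*(m+2)+1) * T) = ((m:ℝ)+2) * Q (m+2) z := by
        calc ((m:ℝ)+2) * ((1-z)^(2*(m+2)+1) * T)
            = ((m:ℝ)+2) * (1-z)^2 * T * (1-z)^(2*m+3) := by
              rw [show 2*(m+2)+1 = (2*m+3)+2 from by omega]
              ring
          _ = (2*(m:ℝ)+3)*(1+z)*Q (m+1) z - ((m:ℝ)+1)*(1-z)^2*Q m z := key
          _ = ((m:ℝ)+2) * Q (m+2) z := by
              have := hq
              push_cast at this ⊢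
              linarith
      have h2c := mul_left_cancel₀ (show ((m:ℝ)+2) ≠ 0 by positivity) key2
      have hTval : T = Q (m+2) z / (1-z)^(2*(m+2)+1) := by
        rw [eq_div_iff (pow_ne_zero _ h1z')]
        linear_combination h2c
      rw [← hTval]
      exact hT


end Stmt7

open Stmt7 in
theorem stmt_7 (n : ℕ) (hn : 0 < n) (x : ℝ) (hx : 0 ≤ x) :
    ∑' k : ℕ, (((n + k - 1).choose k : ℝ) * x ^ k * ((1 + x) ^ (n + k))⁻¹) ^ 2 =
    ∑ j ∈ Finset.range n,
      (1 + 2 * x) ^ (2 * (j : ℤ) - 2 * n + 1) * (4 : ℝ) ^ ((1 : ℤ) - n) *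
        ((2 * (n - j - 1)).choose (n - j - 1) : ℝ) * ((2 * j).choose j) := by
  obtain ⟨m, rfl⟩ : ∃ m, n = m + 1 := ⟨n - 1, by omega⟩
  have hx1 : (0:ℝ) < 1 + x := by linarith
  have hx1' : (1:ℝ) + x ≠ 0 := ne_of_gt hx1
  have hw : (0:ℝ) < 1 + 2*x := by linarith
  have hw' : (1:ℝ) + 2*x ≠ 0 := ne_of_gt hw
  set z : ℝ := x^2/(1+x)^2 with hz
  have hz0 : 0 ≤ z := by positivity
  have hz1 : z < 1 := by
    rw [hz, div_lt_one (by positivity)]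
    nlinarith
  have hPhi := hasSum_Phi m hz0 hz1
  have hs2 := hPhi.mul_right (((1+x)^(2*(m+1)))⁻¹)
  have hfun : (fun k : ℕ => (((m+1+k-1).choose k : ℝ) * x^k * ((1+x)^(m+1+k))⁻¹)^2)
      = (fun k : ℕ => Abk m k * z^k * ((1+x)^(2*(m+1)))⁻¹) := by
    funext k
    rw [show m+1+k-1 = m+k from by omega]
    have hzz : z = (x/(1+x))^2 := by rw [hz, div_pow]
    rw [hzz, ← pow_mul, div_pow]
    simp only [Abk]
    field_simp
    ring
  rw [hfun, hs2.tsum_eq]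
  have hRHS : ∑ j ∈ Finset.range (m+1),
      (1+2*x)^(2*(j:ℤ) - 2*(((m+1):ℕ):ℤ) + 1) * (4:ℝ)^((1:ℤ) - (((m+1):ℕ):ℤ))
        * ((2*(m+1-j-1)).choose (m+1-j-1) : ℝ) * ((2*j).choose j : ℝ)
      = Db m ((1+2*x)^2) * (((1+2*x)^(2*m+1))⁻¹ * ((4:ℝ)^m)⁻¹) := by
    rw [Db, Finset.sum_mul]
    refine Finset.sum_congr rfl fun j hj => ?_
    have hjm : j ≤ m := by
      simp only [Finset.mem_range] at hj
      omega
    rw [show m+1-j-1 = m-j from by omega]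
    simp only [gD, if_pos hjm, cb]
    have hze : (2*(j:ℤ) - 2*(((m+1):ℕ):ℤ) + 1) = 2*(j:ℤ) - (2*(m:ℤ)+1) := by push_cast; ring
    rw [hze, zpow_sub₀ hw']
    rw [show (2*(j:ℤ)) = ((2*j : ℕ) : ℤ) from by push_cast; ring, zpow_natCast]
    rw [show (2*(m:ℤ)+1) = ((2*m+1 : ℕ) : ℤ) from by push_cast; ring, zpow_natCast]
    rw [show (1:ℤ) - (((m+1):ℕ):ℤ) = -(m:ℤ) from by push_cast; ring, zpow_neg, zpow_natCast]
    rw [pow_mul]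
    ring
  rw [hRHS]
  have hPD := PD m x hx
  have h1mz : 1 - z = (1+2*x)/(1+x)^2 := by rw [hz]; field_simp; ring
  rw [h1mz, ← hPD, div_pow, div_div_eq_mul_div]
  have hpow : (((1:ℝ)+x)^2)^(2*m+1) = (1+x)^(2*m) * (1+x)^(2*(m+1)) := by
    rw [← pow_mul, ← pow_add]
    congr 1
    ring
  rw [hpow]
  have e1 : ((1:ℝ)+x)^(2*(m+1)) ≠ 0 := pow_ne_zero _ hx1'
  have e2 : ((1:ℝ)+2*x)^(2*m+1) ≠ 0 := pow_ne_zero _ hw'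
  have e3 : (4:ℝ)^m ≠ 0 := by positivity
  field_simp
  ring
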